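/- For real a, x with 0 < a < x, setting λ = x/a, the upper regularized incomplete gamma function satisfies Q(a,x) = ((λ e^{1-λ})^a / √(2πa)) · (1/(λ-1) + O(1/((λ-1)³ a) + 1/a)), uniformly over all 0 < a < x. -/

import Mathlib

/-!
Write `T = x^a e^(-x)` and `U s = ∫_x^∞ t^(s-1) e^(-t) dt`. Integrating `d/dt (-t^s e^(-t))`
gives `U (s+1) = s U s + x^s e^(-x)`, and together with the positivity of
`∫_x^∞ (t-x)^k t^(a-1) e^(-t) dt` for `k = 1, 2` this pins `(x - a) U a` between
`T - x T / (x - a)^2` and `T`. Hence `Q(a,x) ≈ T / ((x - a) Γ(a))`, and replacing `Γ(a)` by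
Stirling's `√(2π) a^(a-1/2) e^(-a)` turns this into the main term. The Stirling ratio is
`1 + O(1/a)` and bounded, uniformly in `a > 0`: at the integers this is Robbins' bound, in between
it follows from the log-convexity of `Γ`, and below `1` from `Γ(a + 1) = a Γ(a)`.
-/

open MeasureTheory Set Real Filter Topology
open scoped Nat

lemma sub_div_le_log_sub_log {b c : ℝ} (hb : 0 < b) (hc : 0 < c) :
    (c - b) / c ≤ log c - log b := by
  have := one_sub_inv_le_log_of_pos (div_pos hc hb)
  rw [log_div hc.ne' hb.ne', inv_div] at this
  rwa [sub_div, div_self hc.ne']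

lemma log_sub_log_le_sub_div {b c : ℝ} (hb : 0 < b) (hc : 0 < c) :
    log c - log b ≤ (c - b) / b := by
  have := log_le_sub_one_of_pos (div_pos hc hb)
  rwa [log_div hc.ne' hb.ne', div_sub_one hb.ne'] at this

lemma abs_exp_sub_one_le_mul_exp {y M : ℝ} (hM : 0 ≤ M) (hy : y ≤ M) :
    |exp y - 1| ≤ |y| * exp M := by
  rcases le_or_gt 0 y with h | h
  · have h1 : exp y * (-y + 1) ≤ 1 := by
      simpa [← exp_add] using mul_le_mul_of_nonneg_left (add_one_le_exp (-y)) (exp_pos y).le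
    rw [abs_of_nonneg h, abs_of_nonneg (by linarith [add_one_le_exp y])]
    nlinarith [exp_le_exp.2 hy]
  · rw [abs_of_neg h, abs_of_nonpos (sub_nonpos.2 (exp_lt_one_iff.2 h).le)]
    nlinarith [add_one_le_exp y, one_le_exp hM]

lemma inv_pow_le_inv_pow_add_one {u : ℝ} (hu : 0 < u) {k n : ℕ} (hkn : k ≤ n) :
    (u ^ k)⁻¹ ≤ (u ^ n)⁻¹ + 1 := by
  rcases le_or_gt u 1 with h | h
  · have := inv_anti₀ (by positivity) (pow_le_pow_of_le_one hu.le h hkn)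
    linarith
  · have := inv_le_one_of_one_le₀ (one_le_pow₀ (n := k) h.le)
    have : 0 ≤ (u ^ n)⁻¹ := by positivity
    linarith

noncomputable def logStirling (a : ℝ) : ℝ := (a - 1 / 2) * log a - a + log (2 * π) / 2

lemma logStirling_add_mul_le {b c : ℝ} (hb : 0 < b) (hc : 1 / 2 ≤ c) :
    logStirling b + (c - b) * (log b - 1 / (2 * b)) ≤ logStirling c := by
  have hc0 : 0 < c := by linarith
  have hL := mul_le_mul_of_nonneg_left (sub_div_le_log_sub_log hb hc0)
    (by linarith : 0 ≤ c - 1 / 2)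
  have hsq : 0 ≤ (c - 1 / 2) * ((c - b) / c) - (c - b) + (c - b) / (2 * b) := by
    have : (c - 1 / 2) * ((c - b) / c) - (c - b) + (c - b) / (2 * b) =
        (c - b) ^ 2 / (2 * b * c) := by
      field_simp
      ring
    rw [this]
    positivity
  have key : logStirling c - (logStirling b + (c - b) * (log b - 1 / (2 * b))) =
      (c - 1 / 2) * (log c - log b) - (c - b) + (c - b) / (2 * b) := by
    unfold logStirling
    ring
  linarith

lemma log_Gamma_sub_logStirling_natCast {n : ℕ} (hn : n ≠ 0) :
    log (Gamma n) - logStirling n = log (Stirling.stirlingSeq n) - log √π := by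
  have hn0 : (0 : ℝ) < n := by positivity
  have hΓ : Gamma n = n ! / n := by
    rw [← Nat.cast_ne_zero (R := ℝ)] at hn
    rw [eq_div_iff hn, mul_comm, ← Gamma_add_one hn, Gamma_nat_eq_factorial]
  rw [hΓ, Stirling.log_stirlingSeq_formula, log_div (by positivity) hn0.ne', log_sqrt pi_pos.le,
    log_mul two_ne_zero hn0.ne', log_div hn0.ne' (exp_pos 1).ne', log_exp, logStirling,
    log_mul two_ne_zero pi_ne_zero]
  ring

lemma log_stirlingSeq_sub_log_sqrt_pi_le {n : ℕ} (hn : n ≠ 0) :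
    log (Stirling.stirlingSeq n) - log √π ≤ 1 / (12 * n) := by
  obtain ⟨m, rfl⟩ := Nat.exists_eq_succ_of_ne_zero hn
  set g : ℕ → ℝ := fun k => log (Stirling.stirlingSeq (k + 1)) - 1 / (12 * (k + 1 : ℕ))
  -- Robbins' bound `1 / (12 k (k + 1))` telescopes, so `g` increases to its limit `log √π`.
  have hmono : Monotone g := by
    refine monotone_nat_of_le_succ fun k => ?_
    have := Stirling.log_stirlingSeq_sdiff_le (k + 1)
    have hk : (1 : ℝ) / (12 * (k + 1 : ℕ) * ((k + 1 : ℕ) + 1)) =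
        1 / (12 * (k + 1 : ℕ)) - 1 / (12 * (k + 1 + 1 : ℕ)) := by
      push_cast
      field_simp
      ring
    simp only [g]
    linarith
  have hlim : Tendsto g atTop (𝓝 (log √π - 0)) := by
    refine Tendsto.sub ?_ ?_
    · exact ((continuousAt_log (by positivity)).tendsto.comp
        Stirling.tendsto_stirlingSeq_sqrt_pi).comp (tendsto_add_atTop_nat 1)
    · exact tendsto_const_nhds.div_atTop (tendsto_natCast_atTop_atTop.const_mul_atTop (by norm_num)
        |>.comp (tendsto_add_atTop_nat 1))
  have := hmono.ge_of_tendsto hlim m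
  simp only [g, sub_zero] at this
  push_cast at this ⊢
  linarith

lemma log_Gamma_sub_logStirling_natCast_nonneg {n : ℕ} (hn : n ≠ 0) :
    0 ≤ log (Gamma n) - logStirling n := by
  rw [log_Gamma_sub_logStirling_natCast hn, sub_nonneg]
  exact log_le_log (by positivity) (Stirling.sqrt_pi_le_stirlingSeq hn)

lemma log_Gamma_sub_logStirling_natCast_le {n : ℕ} (hn : n ≠ 0) :
    log (Gamma n) - logStirling n ≤ 1 / (12 * n) := by
  rw [log_Gamma_sub_logStirling_natCast hn]
  exact log_stirlingSeq_sub_log_sqrt_pi_le hn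

lemma log_Gamma_add_one {a : ℝ} (ha : 0 < a) : log (Gamma (a + 1)) = log (Gamma a) + log a := by
  rw [Gamma_add_one ha.ne', log_mul ha.ne' (Gamma_pos_of_pos ha).ne', add_comm]

lemma log_Gamma_le_add_mul_log {p a : ℝ} (hp : 0 < p) (hpa : p ≤ a) (hap : a ≤ p + 1) :
    log (Gamma a) ≤ log (Gamma p) + (a - p) * log p := by
  have h := convexOn_log_Gamma.2 (mem_Ioi.2 hp) (mem_Ioi.2 (by linarith : 0 < p + 1))
    (by linarith : 0 ≤ 1 - (a - p)) (by linarith : 0 ≤ a - p) (by ring)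
  simp only [smul_eq_mul, Function.comp_apply, log_Gamma_add_one hp] at h
  rw [show (1 - (a - p)) * p + (a - p) * (p + 1) = a by ring] at h
  linarith

lemma log_Gamma_sub_le_mul_log {a q : ℝ} (ha : 0 < a) (haq : a ≤ q) :
    log (Gamma q) - log (Gamma a) ≤ (q - a) * log q := by
  rcases haq.eq_or_lt with rfl | haq
  · simp
  have h := convexOn_log_Gamma.slope_mono_adjacent (mem_Ioi.2 ha) (mem_Ioi.2 (by linarith))
    haq (lt_add_one q)
  simp only [Function.comp_apply, log_Gamma_add_one (ha.trans haq), add_sub_cancel_left,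
    div_one] at h
  rwa [div_le_iff₀ (by linarith), mul_comm] at h

lemma neg_le_log_Gamma_sub_logStirling {a : ℝ} (ha : 0 < a) :
    -(3 / (2 * a)) ≤ log (Gamma a) - logStirling a := by
  set q : ℝ := ⌊a⌋₊ + 1
  have hqa : a < q := Nat.lt_floor_add_one a
  have hq1 : q - a ≤ 1 := by linarith [Nat.floor_le ha.le]
  have hq0 : 0 < q := ha.trans hqa
  have hq : (1 : ℝ) / 2 ≤ q := by
    simp only [q]
    linarith [Nat.cast_nonneg (α := ℝ) ⌊a⌋₊]
  -- chord of `log ∘ Gamma` on `[a, q]` against the tangent of `logStirling` at `a`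
  have hΓ := log_Gamma_sub_le_mul_log ha hqa.le
  have hS := logStirling_add_mul_le ha hq
  have hΔ : 0 ≤ log (Gamma q) - logStirling q := by
    simpa [q] using log_Gamma_sub_logStirling_natCast_nonneg (Nat.succ_ne_zero ⌊a⌋₊)
  have hB : log q - log a + 1 / (2 * a) ≤ 3 / (2 * a) := by
    have := (log_sub_log_le_sub_div ha hq0).trans (div_le_div_of_nonneg_right hq1 ha.le)
    rw [show 3 / (2 * a) = 1 / a + 1 / (2 * a) by field_simp; norm_num]
    linarith
  have hB0 : 0 ≤ log q - log a + 1 / (2 * a) := by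
    have := log_le_log ha hqa.le
    positivity
  have hw := mul_le_of_le_one_left hB0 hq1
  nlinarith

lemma log_Gamma_sub_logStirling_le_of_one_le {a : ℝ} (ha : 1 ≤ a) :
    log (Gamma a) - logStirling a ≤ 2 / a := by
  have ha0 : 0 < a := by linarith
  set n := ⌊a⌋₊
  have hn : n ≠ 0 := (Nat.floor_pos.2 ha).ne'
  have hn0 : (0 : ℝ) < n := by positivity
  have hna : (n : ℝ) ≤ a := Nat.floor_le ha0.le
  have han : a - n ≤ 1 := by linarith [Nat.lt_floor_add_one a]
  -- chord of `log ∘ Gamma` on `[n, n + 1]` against the tangent of `logStirling` at `n`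
  have hΓ := log_Gamma_le_add_mul_log hn0 hna (by linarith)
  have hS := logStirling_add_mul_le hn0 (by linarith : (1 : ℝ) / 2 ≤ a)
  have hΔ := log_Gamma_sub_logStirling_natCast_le hn
  have hw := mul_le_of_le_one_left (by positivity : (0 : ℝ) ≤ 1 / (2 * n)) han
  -- `a < n + 1 ≤ 2 n`
  have h2 : 1 / (12 * n) + 1 / (2 * n) ≤ 2 / a := by
    rw [div_add_div _ _ (by positivity) (by positivity), div_le_div_iff₀ (by positivity) ha0]
    nlinarith [Nat.lt_floor_add_one a,
      (Nat.one_le_cast (α := ℝ)).2 (Nat.one_le_iff_ne_zero.2 hn)]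
  nlinarith

lemma log_Gamma_sub_logStirling_eq_add_one {a : ℝ} (ha : 0 < a) :
    log (Gamma a) - logStirling a = log (Gamma (a + 1)) - logStirling (a + 1) +
      ((a + 1 / 2) * (log (a + 1) - log a) - 1) := by
  rw [log_Gamma_add_one ha]
  unfold logStirling
  ring

lemma log_Gamma_sub_logStirling_le {a : ℝ} (ha : 0 < a) :
    log (Gamma a) - logStirling a ≤ 3 / a := by
  rcases le_or_gt 1 a with h1 | h1
  · exact (log_Gamma_sub_logStirling_le_of_one_le h1).trans (by gcongr; norm_num)
  have hstep : (a + 1 / 2) * (log (a + 1) - log a) - 1 ≤ 1 / (2 * a) := by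
    have := mul_le_mul_of_nonneg_left (log_sub_log_le_sub_div ha (by linarith : 0 < a + 1))
      (by linarith : 0 ≤ a + 1 / 2)
    rw [add_sub_cancel_left, show (a + 1 / 2) * (1 / a) = 1 + 1 / (2 * a) by field_simp] at this
    linarith
  have h := log_Gamma_sub_logStirling_le_of_one_le (by linarith : 1 ≤ a + 1)
  have h' : 2 / (a + 1) ≤ 2 / a := by gcongr; linarith
  have e : 3 / a = 2 / a + 1 / a := by ring
  have h'' : 1 / (2 * a) ≤ 1 / a := by gcongr; linarith
  rw [log_Gamma_sub_logStirling_eq_add_one ha]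
  linarith

lemma neg_two_le_log_Gamma_sub_logStirling {a : ℝ} (ha : 0 < a) :
    -2 ≤ log (Gamma a) - logStirling a := by
  rcases le_or_gt 1 a with h1 | h1
  · refine le_trans ?_ (neg_le_log_Gamma_sub_logStirling ha)
    rw [neg_le_neg_iff, div_le_iff₀ (by positivity)]
    linarith
  have hstep : -(1 / (2 * (a + 1))) ≤ (a + 1 / 2) * (log (a + 1) - log a) - 1 := by
    have := mul_le_mul_of_nonneg_left (sub_div_le_log_sub_log ha (by linarith : 0 < a + 1))
      (by linarith : 0 ≤ a + 1 / 2)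
    rw [add_sub_cancel_left, show (a + 1 / 2) * (1 / (a + 1)) = 1 - 1 / (2 * (a + 1)) by
      field_simp; ring] at this
    linarith
  have h := neg_le_log_Gamma_sub_logStirling (by linarith : 0 < a + 1)
  have e : 3 / (2 * (a + 1)) + 1 / (2 * (a + 1)) = 2 / (a + 1) := by field_simp; norm_num
  have h' : 2 / (a + 1) ≤ 2 := div_le_self zero_le_two (by linarith)
  rw [log_Gamma_sub_logStirling_eq_add_one ha]
  linarith

lemma exp_logStirling_div_Gamma {a : ℝ} (ha : 0 < a) :
    exp (logStirling a) / Gamma a = exp (-(log (Gamma a) - logStirling a)) := by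
  rw [neg_sub, exp_sub, exp_log (Gamma_pos_of_pos ha)]

lemma exp_logStirling_div_Gamma_le {a : ℝ} (ha : 0 < a) :
    exp (logStirling a) / Gamma a ≤ exp 2 := by
  rw [exp_logStirling_div_Gamma ha, exp_le_exp]
  linarith [neg_two_le_log_Gamma_sub_logStirling ha]

lemma abs_exp_logStirling_div_Gamma_sub_one_le {a : ℝ} (ha : 0 < a) :
    |exp (logStirling a) / Gamma a - 1| ≤ 3 * exp 2 / a := by
  have habs : |log (Gamma a) - logStirling a| ≤ 3 / a := by
    have : 3 / (2 * a) ≤ 3 / a := by gcongr; linarith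
    rw [abs_le]
    exact ⟨by linarith [neg_le_log_Gamma_sub_logStirling ha], log_Gamma_sub_logStirling_le ha⟩
  rw [exp_logStirling_div_Gamma ha, mul_div_right_comm]
  refine (abs_exp_sub_one_le_mul_exp zero_le_two
    (by linarith [neg_two_le_log_Gamma_sub_logStirling ha])).trans ?_
  rw [abs_neg]
  gcongr

lemma rpow_mul_exp_div_sqrt_eq {a x : ℝ} (ha : 0 < a) (hx : 0 < x) :
    ((x / a) * exp (1 - x / a)) ^ a / √(2 * π * a) =
      x ^ a * exp (-x) / (a * exp (logStirling a)) := by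
  have hsqrt : √(2 * π * a) = exp ((log (2 * π) + log a) / 2) := by
    rw [← log_mul (by positivity) ha.ne', ← log_sqrt (by positivity), exp_log (by positivity)]
  have hden : a * exp (logStirling a) = exp (log a + logStirling a) := by rw [exp_add, exp_log ha]
  rw [rpow_def_of_pos (by positivity), rpow_def_of_pos hx, hsqrt, hden, ← exp_add, ← exp_sub,
    ← exp_sub, log_mul (by positivity) (exp_pos _).ne', log_exp,
    log_div hx.ne' ha.ne', logStirling]
  congr 1
  field_simp
  ring

noncomputable def upperIncompleteGamma (s x : ℝ) : ℝ := ∫ t in Ioi x, t ^ (s - 1) * exp (-t)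

section UpperIncompleteGamma

variable {s x : ℝ}

lemma integrableOn_rpow_mul_exp_neg_Ioi (hs : 0 < s) (hx : 0 ≤ x) :
    IntegrableOn (fun t => t ^ (s - 1) * exp (-t)) (Ioi x) := by
  simpa only [mul_comm] using (GammaIntegral_convergent hs).mono_set (Ioi_subset_Ioi hx)

lemma rpow_add_one_sub_one_mul_exp_neg {t : ℝ} (ht : t ≠ 0) :
    t ^ (s + 1 - 1) * exp (-t) = t * (t ^ (s - 1) * exp (-t)) := by
  rw [add_sub_cancel_right, rpow_sub_one ht]
  field_simp

lemma upperIncompleteGamma_add_one_eq_integral (hx : 0 ≤ x) :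
    upperIncompleteGamma (s + 1) x = ∫ t in Ioi x, t * (t ^ (s - 1) * exp (-t)) :=
  setIntegral_congr_fun measurableSet_Ioi fun _ ht =>
    rpow_add_one_sub_one_mul_exp_neg (hx.trans_lt ht).ne'

lemma integrableOn_mul_rpow_mul_exp_neg_Ioi (hs : 0 < s) (hx : 0 ≤ x) :
    IntegrableOn (fun t => t * (t ^ (s - 1) * exp (-t))) (Ioi x) :=
  (integrableOn_rpow_mul_exp_neg_Ioi (s := s + 1) (by linarith) hx).congr_fun
    (fun _ ht => rpow_add_one_sub_one_mul_exp_neg (hx.trans_lt ht).ne') measurableSet_Ioi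

lemma upperIncompleteGamma_add_one (hs : 0 < s) (hx : 0 < x) :
    upperIncompleteGamma (s + 1) x = s * upperIncompleteGamma s x + x ^ s * exp (-x) := by
  have hderiv : ∀ t ∈ Ici x, HasDerivAt (fun t => -(t ^ s * exp (-t)))
      (t ^ (s + 1 - 1) * exp (-t) - s * (t ^ (s - 1) * exp (-t))) t := by
    intro t ht
    have ht0 : 0 < t := hx.trans_le ht
    refine ((hasDerivAt_rpow_const (Or.inl ht0.ne')).mul (hasDerivAt_neg t).exp).neg.congr_deriv ?_
    rw [add_sub_cancel_right, rpow_sub_one ht0.ne']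
    field_simp
    ring
  have hlim : Tendsto (fun t => -(t ^ s * exp (-t))) atTop (𝓝 0) := by
    simpa using (tendsto_rpow_mul_exp_neg_mul_atTop_nhds_zero s 1 one_pos).neg
  have hint := integrableOn_rpow_mul_exp_neg_Ioi hs hx.le
  have hint' := integrableOn_rpow_mul_exp_neg_Ioi (s := s + 1) (by linarith) hx.le
  have key := integral_Ioi_of_hasDerivAt_of_tendsto' hderiv (hint'.sub (hint.const_mul s)) hlim
  rw [integral_sub hint' (hint.const_mul s), integral_const_mul] at key
  unfold upperIncompleteGamma
  linarith

lemma mul_upperIncompleteGamma_le_add_one (hs : 0 < s) (hx : 0 ≤ x) :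
    x * upperIncompleteGamma s x ≤ upperIncompleteGamma (s + 1) x := by
  rw [upperIncompleteGamma_add_one_eq_integral hx, upperIncompleteGamma, ← integral_const_mul]
  refine setIntegral_mono_on ((integrableOn_rpow_mul_exp_neg_Ioi hs hx).const_mul x)
    (integrableOn_mul_rpow_mul_exp_neg_Ioi hs hx) measurableSet_Ioi fun t ht => ?_
  have : 0 ≤ t ^ (s - 1) * exp (-t) := by have := (hx.trans_lt ht).le; positivity
  exact mul_le_mul_of_nonneg_right (le_of_lt ht) this

lemma upperIncompleteGamma_second_moment_nonneg (hs : 0 < s) (hx : 0 ≤ x) :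
    0 ≤ upperIncompleteGamma (s + 2) x - 2 * x * upperIncompleteGamma (s + 1) x +
      x ^ 2 * upperIncompleteGamma s x := by
  have hw := integrableOn_rpow_mul_exp_neg_Ioi hs hx
  have htw := integrableOn_mul_rpow_mul_exp_neg_Ioi hs hx
  have hpow : ∀ t ∈ Ioi x,
      t * (t ^ (s + 1 - 1) * exp (-t)) = t * (t * (t ^ (s - 1) * exp (-t))) :=
    fun t ht => by rw [rpow_add_one_sub_one_mul_exp_neg (hx.trans_lt ht).ne']
  have ht2w := (integrableOn_mul_rpow_mul_exp_neg_Ioi (s := s + 1) (by linarith) hx).congr_fun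
    hpow measurableSet_Ioi
  have h2 : upperIncompleteGamma (s + 2) x =
      ∫ t in Ioi x, t * (t * (t ^ (s - 1) * exp (-t))) := by
    rw [show s + 2 = s + 1 + 1 by ring, upperIncompleteGamma_add_one_eq_integral hx]
    exact setIntegral_congr_fun measurableSet_Ioi hpow
  have hsq : ∫ t in Ioi x, (t - x) ^ 2 * (t ^ (s - 1) * exp (-t)) =
      upperIncompleteGamma (s + 2) x - 2 * x * upperIncompleteGamma (s + 1) x +
        x ^ 2 * upperIncompleteGamma s x := by
    have hdiff : IntegrableOn (fun t => t * (t * (t ^ (s - 1) * exp (-t))) -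
        2 * x * (t * (t ^ (s - 1) * exp (-t)))) (Ioi x) := ht2w.sub (htw.const_mul _)
    rw [h2, upperIncompleteGamma_add_one_eq_integral hx, upperIncompleteGamma,
      ← integral_const_mul, ← integral_const_mul, ← integral_sub ht2w (htw.const_mul _),
      ← integral_add hdiff (hw.const_mul _)]
    congr 1 with t
    ring
  rw [← hsq]
  refine setIntegral_nonneg measurableSet_Ioi fun t ht => ?_
  have := (hx.trans_lt ht).le
  positivity

lemma upperIncompleteGamma_le_div {a : ℝ} (ha : 0 < a) (hax : a < x) :
    upperIncompleteGamma a x ≤ x ^ a * exp (-x) / (x - a) := by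
  have hx : 0 < x := ha.trans hax
  have hrec := upperIncompleteGamma_add_one ha hx
  have hmono := mul_upperIncompleteGamma_le_add_one ha hx.le
  rw [le_div_iff₀ (sub_pos.2 hax)]
  linarith

lemma div_sub_le_upperIncompleteGamma {a : ℝ} (ha : 0 < a) (hax : a < x) :
    x ^ a * exp (-x) / (x - a) - x * (x ^ a * exp (-x)) / (x - a) ^ 3 ≤
      upperIncompleteGamma a x := by
  have hx : 0 < x := ha.trans hax
  have hd : 0 < x - a := sub_pos.2 hax
  set T := x ^ a * exp (-x)
  set U₀ := upperIncompleteGamma a x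
  set U₁ := upperIncompleteGamma (a + 1) x
  have hrec₀ : U₁ = a * U₀ + T := upperIncompleteGamma_add_one ha hx
  have hrec₁ : upperIncompleteGamma (a + 2) x = (a + 1) * U₁ + x * T := by
    rw [show a + 2 = a + 1 + 1 by ring, upperIncompleteGamma_add_one (by linarith) hx,
      rpow_add_one hx.ne']
    ring
  have hmono : x * U₀ ≤ U₁ := mul_upperIncompleteGamma_le_add_one ha hx.le
  have hvar := upperIncompleteGamma_second_moment_nonneg ha hx.le
  rw [hrec₁] at hvar
  -- `T - (x - a) U₀ = U₁ - x U₀` is the first moment `∫_x^∞ (t - x) t^(a-1) e^(-t) dt`,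
  -- and the second moment bounds it by `U₁ / (x - a)`.
  have h₁ : (x - a) * (T - (x - a) * U₀) ≤ U₁ := by nlinarith
  have h₂ : (x - a) * U₁ ≤ x * T := by nlinarith
  have h₃ : (x - a) ^ 2 * (T - (x - a) * U₀) ≤ x * T := by nlinarith
  have key : (T - (x - a) * U₀) / (x - a) ≤ x * T / (x - a) ^ 3 := by
    rw [div_le_div_iff₀ hd (by positivity)]
    nlinarith
  have e : T / (x - a) - (T - (x - a) * U₀) / (x - a) = U₀ := by
    field_simp
    ring
  linarith

end UpperIncompleteGamma

lemma abs_inv_mul_sub_div_le {a x T S G I C K : ℝ} (ha : 0 < a) (hax : a < x) (hT : 0 ≤ T)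
    (hS : 0 < S) (hG : 0 < G) (hI_le : I ≤ T / (x - a))
    (hI_ge : T / (x - a) - x * T / (x - a) ^ 3 ≤ I) (hC : |S / G - 1| ≤ C / a)
    (hK : S / G ≤ K) :
    |1 / G * I - T / (a * S) / (x / a - 1)| ≤
      (C + 2 * K) * (T / (a * S)) * (1 / ((x / a - 1) ^ 3 * a) + 1 / a) := by
  set u := x / a - 1 with hu
  have hu0 : 0 < u := by rw [hu, sub_pos, one_lt_div ha]; exact hax
  have hxa : x - a = a * u := by rw [hu]; field_simp
  have hx : x = a * (1 + u) := by linarith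
  set M := T / (a * S)
  have hM : 0 ≤ M := by positivity
  have hK0 : 0 ≤ K := (div_pos hS hG).le.trans hK
  have hC0 : 0 ≤ C :=
    ((div_nonneg_iff.1 ((abs_nonneg _).trans hC)).resolve_right fun h => h.2.not_gt ha).1
  -- the main term `M / u` is `T / (S (x - a))`
  have hsplit : 1 / G * I - M / u = S / G * ((I - T / (x - a)) / S) + (S / G - 1) * (M / u) := by
    rw [hxa]
    simp only [M]
    field_simp
    ring
  have hI : |I - T / (x - a)| ≤ x * T / (x - a) ^ 3 :=
    abs_sub_le_iff.2 ⟨by linarith, by linarith⟩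
  have h₁ : |S / G * ((I - T / (x - a)) / S)| ≤
      K * M * (((u ^ 3)⁻¹ + (u ^ 2)⁻¹) / a) := by
    rw [abs_mul, abs_of_pos (div_pos hS hG), abs_div, abs_of_pos hS]
    calc S / G * (|I - T / (x - a)| / S) ≤ K * (x * T / (x - a) ^ 3 / S) := by gcongr
      _ = K * M * (((u ^ 3)⁻¹ + (u ^ 2)⁻¹) / a) := by
        rw [hxa, hx]
        simp only [M]
        field_simp
  have h₂ : |(S / G - 1) * (M / u)| ≤ C * M * ((u ^ 1)⁻¹ / a) := by
    rw [abs_mul, abs_of_nonneg (by positivity : 0 ≤ M / u)]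
    calc |S / G - 1| * (M / u) ≤ C / a * (M / u) := by gcongr
      _ = C * M * ((u ^ 1)⁻¹ / a) := by field_simp
  have hE₂ := div_le_div_of_nonneg_right (inv_pow_le_inv_pow_add_one hu0 (k := 2) (n := 3)
    (by norm_num)) ha.le
  have hE₁ := div_le_div_of_nonneg_right (inv_pow_le_inv_pow_add_one hu0 (k := 1) (n := 3)
    (by norm_num)) ha.le
  have hE₀ : (u ^ 3)⁻¹ / a ≤ ((u ^ 3)⁻¹ + 1) / a := by gcongr; norm_num
  rw [hsplit, show 1 / (u ^ 3 * a) + 1 / a = ((u ^ 3)⁻¹ + 1) / a by field_simp]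
  refine (abs_add_le _ _).trans ?_
  rw [add_div (u ^ 3)⁻¹] at h₁
  nlinarith [mul_le_mul_of_nonneg_left hE₂ (mul_nonneg hK0 hM),
    mul_le_mul_of_nonneg_left hE₁ (mul_nonneg hC0 hM),
    mul_le_mul_of_nonneg_left hE₀ (mul_nonneg hK0 hM)]

/-- Uniform Temme-type estimate for the upper regularized incomplete gamma function:
with `λ = x/a`, `Q(a,x) = ((λ e^{1-λ})^a/√(2πa)) (1/(λ-1) + O(1/((λ-1)³ a) + 1/a))`
uniformly for `0 < a < x`. -/
theorem upper_incomplete_gamma_asymp :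
    ∃ C : ℝ, ∀ a x : ℝ, 0 < a → a < x →
      |(1 / Real.Gamma a) * (∫ t in Ioi x, t ^ (a - 1) * Real.exp (-t)) -
          ((x / a) * Real.exp (1 - x / a)) ^ a / (Real.sqrt (2 * Real.pi * a) * (x / a - 1))| ≤
        C * (((x / a) * Real.exp (1 - x / a)) ^ a / Real.sqrt (2 * Real.pi * a)) *
          (1 / ((x / a - 1) ^ 3 * a) + 1 / a) := by
  refine ⟨3 * exp 2 + 2 * exp 2, fun a x ha hax => ?_⟩
  have hx : 0 < x := ha.trans hax
  rw [← div_div (((x / a) * exp (1 - x / a)) ^ a), rpow_mul_exp_div_sqrt_eq ha hx]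
  exact abs_inv_mul_sub_div_le ha hax (by positivity) (exp_pos _) (Gamma_pos_of_pos ha)
    (upperIncompleteGamma_le_div ha hax) (div_sub_le_upperIncompleteGamma ha hax)
    (abs_exp_logStirling_div_Gamma_sub_one_le ha) (exp_logStirling_div_Gamma_le ha)
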